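/- For all integers n, l0 with 1 ≤ l0 ≤ n−1, and every real polynomial q of degree l0+1 with q(0) = 0, the function q(z) · Σ_{l=0}^{l0+1} C^{(l)}_{n,l0+1} · P_{n−l}(z) lies in the real linear span of {P_{n−l0}(z), P_{n−l0+1}(z), …, P_{n+l0+1}(z)}. -/

import Mathlib

open Finset

/-- Pochhammer symbol `(a)_k = a (a+1) ⋯ (a+k-1)`. -/
noncomputable def poch (a : ℝ) (k : ℕ) : ℝ := ∏ i ∈ Finset.range k, (a + (i : ℝ))

/-- The Hendriksen–van Rossum polynomial `P_n(z; α, β)`. -/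
noncomputable def HR (α β : ℝ) (n : ℕ) (z : ℝ) : ℝ :=
  (poch β n / poch (α + 1) n) *
    ∑ k ∈ Finset.range (n + 1),
      poch (-(n : ℝ)) k * poch (α + 1) k /
          (poch (1 - β - (n : ℝ)) k * (Nat.factorial k : ℝ)) * z ^ k

/-- `d_m(α,β) = −(m+β)/(m+α+1)`. -/
noncomputable def dco (α β m : ℝ) : ℝ := -(m + β) / (m + α + 1)

/-- `b_m(α,β) = −m(m+α+β)/((m+α)(m+α+1))`. -/
noncomputable def bco (α β m : ℝ) : ℝ := -(m * (m + α + β)) / ((m + α) * (m + α + 1))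

/-- Connection coefficients `C^{(l)}_{n,j}` (computed with parameters `(α,β)`):
`C^{(0)}_{n,j} = 1`; `C^{(1)}_{n,j} = Σ_{k=0}^{j−1} b_n(α+k, β−k)`;
`C^{(j)}_{n,j} = Π_{k=0}^{j−1} b_{n−k}(α+j−1−k, β−j+1+k)`;
`C^{(l)}_{n,j} = C^{(l)}_{n,j−1} + b_n(α+j−1, β−j+1)·C^{(l−1)}_{n−1,j−1}` for `2 ≤ l ≤ j−1`;
and `0` out of range. Arguments: `Ccoef α β n j l`. -/
noncomputable def Ccoef (α β : ℝ) : ℕ → ℕ → ℕ → ℝ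
  | _, _, 0 => 1
  | n, j, 1 =>
      if 1 ≤ j then ∑ k ∈ Finset.range j, bco (α + (k : ℝ)) (β - (k : ℝ)) (n : ℝ) else 0
  | _, 0, (_ + 2) => 0
  | n, (j + 1), (l + 2) =>
      if l + 2 = j + 1 then
        ∏ k ∈ Finset.range (j + 1),
          bco (α + (j : ℝ) - (k : ℝ)) (β - (j : ℝ) + (k : ℝ)) ((n : ℝ) - (k : ℝ))
      else if l + 2 ≤ j then
        Ccoef α β n j (l + 2)
          + bco (α + (j : ℝ)) (β - (j : ℝ)) (n : ℝ) * Ccoef α β (n - 1) j (l + 1)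
      else 0

/-!
The HR polynomials satisfy two contiguous relations in the parameters,

  `P_n(α+1, β-1) = P_n(α, β) + b_n(α, β) P_{n-1}(α, β)`,
  `z P_n(α+1, β-1) = P_{n+1}(α, β) + d_n(α, β) P_n(α, β)`,

both rational identities between the coefficients of `z^k`. Iterating the first along the
parameters `(α+k, β-k)`, `k < j`, gives the connection formula
`P_n(α+j, β-j) = Σ_l C^{(l)}_{n,j} P_{n-l}(α, β)`: the recursion defining `C^{(l)}_{n,j}` is
exactly the bookkeeping of this iteration. So for `j = l0 + 1` the function in question is
`q(z) P_n(α+j, β-j)`. Iterating both relations, `z^i P_n(α+j, β-j)` lies in the span of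
`P_{n+i-j}(α, β), …, P_{n+i}(α, β)` for `i ≤ j`, and since `q` has no constant term only
`1 ≤ i ≤ j` occur.
-/

lemma poch_succ_right (a : ℝ) (k : ℕ) : poch a (k + 1) = poch a k * (a + k) :=
  prod_range_succ _ k

lemma poch_succ_left (a : ℝ) (k : ℕ) : poch a (k + 1) = a * poch (a + 1) k := by
  rw [poch, prod_range_succ', mul_comm, poch]
  simp only [Nat.cast_succ, Nat.cast_zero, add_zero, add_assoc, add_comm (1 : ℝ)]

lemma poch_mul_add (a : ℝ) (k : ℕ) : poch a k * (a + k) = a * poch (a + 1) k := by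
  rw [← poch_succ_right, poch_succ_left]

lemma poch_add_one (a : ℝ) (k : ℕ) (ha : a ≠ 0) :
    poch (a + 1) k = poch a k * (a + k) / a := by
  rw [eq_div_iff ha, mul_comm, poch_mul_add]

lemma poch_neg_natCast_eq_zero {m k : ℕ} (h : m < k) : poch (-m) k = 0 :=
  prod_eq_zero (mem_range.mpr h) (neg_add_cancel _)

noncomputable def hrCoeff (α β : ℝ) (n k : ℕ) : ℝ :=
  poch β n / poch (α + 1) n *
    (poch (-(n : ℝ)) k * poch (α + 1) k / (poch (1 - β - n) k * k.factorial))

lemma HR_eq_sum_hrCoeff (α β : ℝ) (n : ℕ) (z : ℝ) :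
    HR α β n z = ∑ k ∈ range (n + 1), hrCoeff α β n k * z ^ k := by
  simp only [HR, hrCoeff, mul_sum, mul_assoc]

lemma hrCoeff_eq_zero_of_lt (α β : ℝ) {n k : ℕ} (h : n < k) : hrCoeff α β n k = 0 := by
  simp [hrCoeff, poch_neg_natCast_eq_zero h]

lemma HR_eq_sum_range_hrCoeff_of_le (α β : ℝ) {n N : ℕ} (h : n + 1 ≤ N) (z : ℝ) :
    HR α β n z = ∑ k ∈ range N, hrCoeff α β n k * z ^ k := by
  rw [HR_eq_sum_hrCoeff]
  refine sum_subset (range_subset_range.mpr h) fun k _ hk => ?_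
  rw [hrCoeff_eq_zero_of_lt α β (by simpa using hk), zero_mul]

lemma hrCoeff_zero (α β : ℝ) (n : ℕ) : hrCoeff α β n 0 = poch β n / poch (α + 1) n := by
  simp [hrCoeff, poch]

lemma Ccoef_zero (α β : ℝ) (n j : ℕ) : Ccoef α β n j 0 = 1 := by rw [Ccoef]

lemma Ccoef_eq_zero_of_lt (α β : ℝ) {n j l : ℕ} (h : j < l) : Ccoef α β n j l = 0 := by
  match j, l with
  | _, 1 => rw [Ccoef, if_neg (by omega)]
  | 0, _ + 2 => rw [Ccoef]
  | _ + 1, _ + 2 => rw [Ccoef, if_neg (by omega), if_neg (by omega)]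

lemma Ccoef_diag (α β : ℝ) (n j : ℕ) :
    Ccoef α β n (j + 1) (j + 1) =
      ∏ k ∈ range (j + 1), bco (α + j - k) (β - j + k) (n - k) := by
  rcases j with _ | j
  · simp [Ccoef]
  · rw [Ccoef, if_pos rfl]

lemma Ccoef_succ_one (α β : ℝ) (n j : ℕ) :
    Ccoef α β n (j + 1) 1 = Ccoef α β n j 1 + bco (α + j) (β - j) n := by
  rcases j with _ | j
  · simp [Ccoef]
  · rw [Ccoef, if_pos (by omega), Ccoef, if_pos (by omega), sum_range_succ]

lemma Ccoef_succ_succ (α β : ℝ) (n j l : ℕ) :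
    Ccoef α β n (j + 1) (l + 1) =
      Ccoef α β n j (l + 1) + bco (α + j) (β - j) n * Ccoef α β (n - 1) j l := by
  rcases l with _ | l
  · rw [Ccoef_succ_one, Ccoef_zero, mul_one]
  rcases lt_trichotomy (l + 1) j with h | rfl | h
  · rw [Ccoef, if_neg (by omega), if_pos (by omega)]
  · rw [Ccoef, if_pos rfl, Ccoef_eq_zero_of_lt α β (by omega), zero_add, prod_range_succ']
    rcases n with _ | n
    · simp [bco]
    · rw [Nat.add_sub_cancel, Ccoef_diag]
      push_cast
      simp only [sub_zero, add_zero, mul_comm _ (bco _ _ _)]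
      congr 1
      refine prod_congr rfl fun k _ => ?_
      congr 1 <;> ring
  · rw [Ccoef, if_neg (by omega), if_neg (by omega), Ccoef_eq_zero_of_lt α β (by omega),
      Ccoef_eq_zero_of_lt α β (by omega)]
    ring

lemma forall_ne_intCast_add_natCast {x : ℝ} (hx : ∀ m : ℤ, x ≠ m) (j : ℕ) :
    ∀ m : ℤ, x + j ≠ m :=
  fun m h => hx (m - j) (by push_cast; linarith)

lemma forall_ne_intCast_sub_natCast {x : ℝ} (hx : ∀ m : ℤ, x ≠ m) (j : ℕ) :
    ∀ m : ℤ, x - j ≠ m :=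
  fun m h => hx (m + j) (by push_cast; linarith)

noncomputable def hrSpan (α β : ℝ) (a b : ℕ) : Submodule ℝ (ℝ → ℝ) :=
  Submodule.span ℝ (HR α β '' ↑(Icc a b))

lemma HR_mem_hrSpan {α β : ℝ} {a b m : ℕ} (ha : a ≤ m) (hb : m ≤ b) :
    HR α β m ∈ hrSpan α β a b :=
  Submodule.subset_span ⟨m, by simp [ha, hb], rfl⟩

lemma hrSpan_mono {α β : ℝ} {a b a' b' : ℕ} (ha : a' ≤ a) (hb : b ≤ b') :
    hrSpan α β a b ≤ hrSpan α β a' b' :=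
  Submodule.span_mono (Set.image_mono (by simpa using Set.Icc_subset_Icc ha hb))

section

variable {α β : ℝ} (hα : ∀ m : ℤ, α ≠ m) (hβ : ∀ m : ℤ, β ≠ m)
include hα hβ

lemma hrCoeff_add_one_sub_one_eq_bco (m k : ℕ) :
    hrCoeff (α + 1) (β - 1) (m + 1) k =
      hrCoeff α β (m + 1) k + bco α β (m + 1) * hrCoeff α β m k := by
  have hα1 : α + 1 ≠ 0 := fun h => hα (-1) (by push_cast; linarith)
  have hm1 : (m : ℝ) + 1 ≠ 0 := by positivity
  have hβm : -β - m ≠ 0 := fun h => hβ (-m) (by push_cast; linarith)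
  have hβmk : k - β - m ≠ 0 := fun h => hβ (k - m) (by push_cast; linarith)
  have hαm : α + 1 + m ≠ 0 := fun h => hα (-1 - m) (by push_cast; linarith)
  have hαm' : α + 1 + 1 + m ≠ 0 := fun h => hα (-2 - m) (by push_cast; linarith)
  have hb1 : (m : ℝ) + 1 + α ≠ 0 := fun h => hα (-1 - m) (by push_cast; linarith)
  have hb2 : (m : ℝ) + 1 + α + 1 ≠ 0 := fun h => hα (-2 - m) (by push_cast; linarith)
  have e1 : poch (-β - m) k = (-β - m) * poch (1 - β - m) k / (k - β - m) := by
    have h := poch_mul_add (-β - m) k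
    rw [show -β - m + 1 = 1 - β - m by ring] at h
    rw [eq_div_iff hβmk]; linear_combination h
  have e2 : poch (-(m : ℝ)) k =
      poch (-((m : ℝ) + 1)) k * (k - (m + 1)) / (-((m : ℝ) + 1)) := by
    have h := poch_mul_add (-((m : ℝ) + 1)) k
    rw [show -((m : ℝ) + 1) + 1 = -m by ring] at h
    rw [eq_div_iff (neg_ne_zero.mpr hm1)]; linear_combination -h
  have e3 : poch (α + 1 + 1) (m + 1) =
      poch (α + 1) m * (α + 1 + m) * (α + 1 + 1 + m) / (α + 1) := by
    rw [poch_succ_right, poch_add_one _ _ hα1]; ring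
  rw [hrCoeff, hrCoeff, hrCoeff]
  push_cast
  rw [poch_succ_left (β - 1), e3, poch_add_one _ k hα1, poch_succ_right β,
    poch_succ_right (α + 1), show 1 - (β - 1) - ((m : ℝ) + 1) = 1 - β - m by ring,
    show β - 1 + 1 = β by ring, show 1 - β - ((m : ℝ) + 1) = -β - m by ring, e1, e2, bco]
  field_simp
  ring

lemma hrCoeff_add_one_sub_one_eq_dco (n k : ℕ) :
    hrCoeff (α + 1) (β - 1) n k =
      hrCoeff α β (n + 1) (k + 1) + dco α β n * hrCoeff α β n (k + 1) := by
  have hα1 : α + 1 ≠ 0 := fun h => hα (-1) (by push_cast; linarith)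
  have hαn : α + 1 + n ≠ 0 := fun h => hα (-1 - n) (by push_cast; linarith)
  have hd : (n : ℝ) + α + 1 ≠ 0 := fun h => hα (-1 - n) (by push_cast; linarith)
  have hβn : β - 1 + n ≠ 0 := fun h => hβ (1 - n) (by push_cast; linarith)
  have hβn' : 1 - β - n ≠ 0 := fun h => hβ (1 - n) (by push_cast; linarith)
  have hβnk : 1 - β - n + k ≠ 0 := fun h => hβ (1 - n + k) (by push_cast; linarith)
  have hβn'' : -β - n ≠ 0 := fun h => hβ (-n) (by push_cast; linarith)
  have e1 : poch (β - 1) n = (β - 1) * poch β n / (β - 1 + n) := by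
    have h := poch_mul_add (β - 1) n
    rw [show β - 1 + 1 = β by ring] at h
    rw [eq_div_iff hβn]; linear_combination h
  have e2 : poch (1 - (β - 1) - n) k = poch (1 - β - n) k * (1 - β - n + k) / (1 - β - n) := by
    rw [← poch_add_one _ _ hβn']; ring_nf
  have e3 : poch (-((n : ℝ) + 1)) (k + 1) = -((n : ℝ) + 1) * poch (-n) k := by
    rw [poch_succ_left]; ring_nf
  have e4 : poch (-β - n) (k + 1) = (-β - n) * poch (1 - β - n) k := by
    rw [poch_succ_left]; ring_nf
  rw [hrCoeff, hrCoeff, hrCoeff]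
  push_cast
  rw [e1, e2, poch_add_one _ n hα1, poch_add_one _ k hα1, poch_succ_right β,
    poch_succ_right (α + 1) n, show 1 - β - ((n : ℝ) + 1) = -β - n by ring, e3, e4,
    poch_succ_right (α + 1) k, poch_succ_right (-(n : ℝ)), poch_succ_right (1 - β - n),
    Nat.factorial_succ, dco]
  push_cast
  field_simp
  ring

-- At `n = 0` the truncated `n - 1` is harmless since `b_0 = 0`.
lemma HR_add_one_sub_one (n : ℕ) (z : ℝ) :
    HR (α + 1) (β - 1) n z = HR α β n z + bco α β n * HR α β (n - 1) z := by
  rcases n with _ | m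
  · simp [HR, poch, bco]
  rw [HR_eq_sum_hrCoeff, HR_eq_sum_hrCoeff, Nat.add_sub_cancel,
    HR_eq_sum_range_hrCoeff_of_le α β (Nat.le_succ _), mul_sum, ← sum_add_distrib]
  refine sum_congr rfl fun k _ => ?_
  rw [hrCoeff_add_one_sub_one_eq_bco hα hβ]
  push_cast
  ring

lemma mul_HR_add_one_sub_one (n : ℕ) (z : ℝ) :
    z * HR (α + 1) (β - 1) n z = HR α β (n + 1) z + dco α β n * HR α β n z := by
  have hαn : (n : ℝ) + α + 1 ≠ 0 := fun h => hα (-1 - n) (by push_cast; linarith)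
  have hαn' : α + 1 + n ≠ 0 := fun h => hα (-1 - n) (by push_cast; linarith)
  have hconst : hrCoeff α β (n + 1) 0 + dco α β n * hrCoeff α β n 0 = 0 := by
    rw [hrCoeff_zero, hrCoeff_zero, poch_succ_right, poch_succ_right, dco]
    field_simp
    ring
  rw [HR_eq_sum_hrCoeff, HR_eq_sum_hrCoeff, HR_eq_sum_range_hrCoeff_of_le α β (N := n + 1 + 1)
    (by omega), mul_sum, mul_sum, ← sum_add_distrib, sum_range_succ' _ (n + 1), pow_zero, mul_one,
    mul_one, hconst, add_zero]
  refine sum_congr rfl fun k _ => ?_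
  rw [hrCoeff_add_one_sub_one_eq_dco hα hβ]
  ring

lemma HR_add_succ_sub_succ (j n : ℕ) (z : ℝ) :
    HR (α + (j + 1 : ℕ)) (β - (j + 1 : ℕ)) n z =
      HR (α + j) (β - j) n z + bco (α + j) (β - j) n * HR (α + j) (β - j) (n - 1) z := by
  rw [Nat.cast_succ, ← add_assoc, ← sub_sub]
  exact HR_add_one_sub_one (forall_ne_intCast_add_natCast hα j)
    (forall_ne_intCast_sub_natCast hβ j) n z

lemma mul_HR_add_succ_sub_succ (j n : ℕ) (z : ℝ) :
    z * HR (α + (j + 1 : ℕ)) (β - (j + 1 : ℕ)) n z =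
      HR (α + j) (β - j) (n + 1) z + dco (α + j) (β - j) n * HR (α + j) (β - j) n z := by
  rw [Nat.cast_succ, ← add_assoc, ← sub_sub]
  exact mul_HR_add_one_sub_one (forall_ne_intCast_add_natCast hα j)
    (forall_ne_intCast_sub_natCast hβ j) n z

lemma HR_add_natCast_sub_natCast (j n : ℕ) (z : ℝ) :
    HR (α + j) (β - j) n z = ∑ l ∈ range (j + 1), Ccoef α β n j l * HR α β (n - l) z := by
  induction j generalizing n with
  | zero => simp [Ccoef_zero]
  | succ j ih =>
    have hext : ∑ l ∈ range (j + 1), Ccoef α β n j l * HR α β (n - l) z =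
        ∑ l ∈ range (j + 2), Ccoef α β n j l * HR α β (n - l) z := by
      rw [sum_range_succ _ (j + 1), Ccoef_eq_zero_of_lt α β (by omega), zero_mul, add_zero]
    rw [HR_add_succ_sub_succ hα hβ, ih, ih, hext, sum_range_succ' _ (j + 1),
      sum_range_succ' _ (j + 1), mul_sum]
    simp only [Ccoef_succ_succ, Ccoef_zero, add_mul, sum_add_distrib, Nat.sub_sub, mul_assoc,
      add_comm 1]
    ring

lemma pow_mul_HR_mem_hrSpan {i j : ℕ} (hij : i ≤ j) (n : ℕ) :
    (fun z => z ^ i * HR (α + j) (β - j) n z) ∈ hrSpan α β (n + i - j) (n + i) := by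
  induction j generalizing i n with
  | zero =>
    obtain rfl : i = 0 := by omega
    simpa using HR_mem_hrSpan (α := α) (β := β) le_rfl le_rfl
  | succ j ih =>
    rcases i with _ | i
    · have e : (fun z => z ^ 0 * HR (α + (j + 1 : ℕ)) (β - (j + 1 : ℕ)) n z) =
          (fun z => z ^ 0 * HR (α + j) (β - j) n z) +
            bco (α + j) (β - j) n • fun z => z ^ 0 * HR (α + j) (β - j) (n - 1) z := by
        funext z
        simp only [Pi.add_apply, Pi.smul_apply, smul_eq_mul, pow_zero, one_mul,
          HR_add_succ_sub_succ hα hβ]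
      rw [e]
      refine add_mem (hrSpan_mono ?_ ?_ (ih j.zero_le n))
        (Submodule.smul_mem _ _ (hrSpan_mono ?_ ?_ (ih j.zero_le (n - 1)))) <;> omega
    · have e : (fun z => z ^ (i + 1) * HR (α + (j + 1 : ℕ)) (β - (j + 1 : ℕ)) n z) =
          (fun z => z ^ i * HR (α + j) (β - j) (n + 1) z) +
            dco (α + j) (β - j) n • fun z => z ^ i * HR (α + j) (β - j) n z := by
        funext z
        rw [pow_succ, mul_assoc, mul_HR_add_succ_sub_succ hα hβ]
        simp only [Pi.add_apply, Pi.smul_apply, smul_eq_mul]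
        ring
      rw [e]
      refine add_mem (hrSpan_mono ?_ ?_ (ih (by omega) (n + 1)))
        (Submodule.smul_mem _ _ (hrSpan_mono ?_ ?_ (ih (by omega) n))) <;> omega

lemma eval_mul_HR_mem_hrSpan {q : Polynomial ℝ} {j : ℕ} (hq : q.natDegree ≤ j)
    (hq0 : q.eval 0 = 0) (n : ℕ) :
    (fun z => q.eval z * HR (α + j) (β - j) n z) ∈ hrSpan α β (n + 1 - j) (n + j) := by
  have e : (fun z => q.eval z * HR (α + j) (β - j) n z) =
      ∑ i ∈ range (j + 1), q.coeff i • fun z => z ^ i * HR (α + j) (β - j) n z := by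
    funext z
    simp only [Polynomial.eval_eq_sum_range' (Nat.lt_succ_of_le hq), sum_mul, Finset.sum_apply,
      Pi.smul_apply, smul_eq_mul, mul_assoc]
  rw [e]
  refine Submodule.sum_mem _ fun i hi => ?_
  rcases i with _ | i
  · simp [Polynomial.coeff_zero_eq_eval_zero, hq0]
  · have hi : i + 1 ≤ j := by simpa [Nat.lt_succ_iff] using hi
    exact Submodule.smul_mem _ _
      (hrSpan_mono (by omega) (by omega) (pow_mul_HR_mem_hrSpan hα hβ hi n))

end

theorem stmt15_general (α β : ℝ)
    (hα : ∀ m : ℤ, α ≠ (m : ℝ)) (hβ : ∀ m : ℤ, β ≠ (m : ℝ))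
    (n l0 : ℕ)
    (q : Polynomial ℝ) (hq : q.degree = (l0 + 1 : ℕ)) (hq0 : q.eval 0 = 0) :
    ∃ c : ℕ → ℝ, ∀ z : ℝ,
      q.eval z * ∑ l ∈ Finset.range (l0 + 2), Ccoef α β n (l0 + 1) l * HR α β (n - l) z
        = ∑ m ∈ Finset.Icc (n - l0) (n + l0 + 1), c m * HR α β m z := by
  have hmem := eval_mul_HR_mem_hrSpan hα hβ (Polynomial.natDegree_le_of_degree_le hq.le) hq0 n
  rw [show n + 1 - (l0 + 1) = n - l0 by omega, ← add_assoc] at hmem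
  obtain ⟨c, hc⟩ := (Submodule.mem_span_image_finset_iff_exists_fun' ℝ).mp hmem
  refine ⟨c, fun z => ?_⟩
  rw [← HR_add_natCast_sub_natCast hα hβ, ← congrFun hc z]
  simp [Finset.sum_apply]

/-- For `1 ≤ l0 ≤ n−1` and every real polynomial `q` of degree `l0+1` with `q(0) = 0`, the
function `q(z) · Σ_{l=0}^{l0+1} C^{(l)}_{n,l0+1} P_{n−l}(z)` lies in the span of
`{P_{n−l0}, …, P_{n+l0+1}}`. -/
theorem stmt15 (α β : ℝ)
    (hα : ∀ m : ℤ, α ≠ (m : ℝ)) (hβ : ∀ m : ℤ, β ≠ (m : ℝ))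
    (hαβ : ∀ m : ℤ, α + β ≠ (m : ℝ))
    (n l0 : ℕ) (hl0 : 1 ≤ l0) (hln : l0 + 1 ≤ n)
    (q : Polynomial ℝ) (hq : q.degree = (l0 + 1 : ℕ)) (hq0 : q.eval 0 = 0) :
    ∃ c : ℕ → ℝ, ∀ z : ℝ,
      q.eval z * ∑ l ∈ Finset.range (l0 + 2), Ccoef α β n (l0 + 1) l * HR α β (n - l) z
        = ∑ m ∈ Finset.Icc (n - l0) (n + l0 + 1), c m * HR α β m z :=
  stmt15_general α β hα hβ n l0 q hq hq0
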